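/- Menelaus's theorem: Let ABC be a triangle and P, Q, R points on lines BC, CA, AB respectively, none equal to a vertex, with P = B + t_P(C − B), Q = C + t_Q(A − C), R = A + t_R(B − A), t_P, t_Q, t_R ∉ {0,1}. Then P, Q, R are collinear if and only if (t_R/(1−t_R))·(t_P/(1−t_P))·(t_Q/(1−t_Q)) = −1. -/

import Mathlib

noncomputable section

abbrev Pt := EuclideanSpace ℝ (Fin 2)

/-!
Writing everything relative to the basis `B - A`, `C - A` of the plane, `Q - P` and `R - P` get
explicit coordinates, and `P, Q, R` are collinear exactly when the 2×2 determinant of these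
coordinates vanishes. That determinant is `tP tQ tR + (1 - tP)(1 - tQ)(1 - tR)`, the barycentric
determinant of the three points, and dividing by `(1 - tP)(1 - tQ)(1 - tR)` gives the ratio form.
-/

section

variable {k V P : Type*} [Field k] [AddCommGroup V] [Module k V] [AddTorsor V P]

theorem affineIndependent_iff_linearIndependent_vsub_three {p₁ p₂ p₃ : P} :
    AffineIndependent k ![p₁, p₂, p₃] ↔ LinearIndependent k ![p₂ -ᵥ p₁, p₃ -ᵥ p₁] := by
  rw [affineIndependent_iff_linearIndependent_vsub k _ 0,
    ← linearIndependent_equiv (finSuccAboveEquiv (0 : Fin 3))]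
  congr!
  ext i
  fin_cases i <;> rfl

theorem collinear_iff_of_vsub_eq {u w : V} (huw : LinearIndependent k ![u, w]) {p q r : P}
    {a b c d : k} (hq : q -ᵥ p = a • u + b • w) (hr : r -ᵥ p = c • u + d • w) :
    Collinear k {p, q, r} ↔ a * d = b * c := by
  rw [collinear_iff_not_affineIndependent_set, affineIndependent_iff_linearIndependent_vsub_three,
    hq, hr, LinearIndependent.pair_add_smul_add_smul_iff]
  simp [huw]

end

theorem collinear_iff_menelaus_polynomial {k V : Type*} [Field k] [AddCommGroup V] [Module k V]
    {A B C : V} (hABC : AffineIndependent k ![A, B, C]) (tP tQ tR : k) :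
    Collinear k {B + tP • (C - B), C + tQ • (A - C), A + tR • (B - A)} ↔
      tP * tQ * tR + (1 - tP) * (1 - tQ) * (1 - tR) = 0 := by
  rw [affineIndependent_iff_linearIndependent_vsub_three] at hABC
  rw [collinear_iff_of_vsub_eq hABC (a := tP - 1) (b := 1 - tQ - tP) (c := tR - 1 + tP) (d := -tP)
    (by simp only [vsub_eq_sub]; module) (by simp only [vsub_eq_sub]; module)]
  constructor <;> intro h <;> linear_combination h

theorem menelaus_ratio_iff {k : Type*} [Field k] {tP tQ tR : k}
    (htP : 1 - tP ≠ 0) (htQ : 1 - tQ ≠ 0) (htR : 1 - tR ≠ 0) :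
    (tR / (1 - tR)) * (tP / (1 - tP)) * (tQ / (1 - tQ)) = -1 ↔
      tP * tQ * tR + (1 - tP) * (1 - tQ) * (1 - tR) = 0 := by
  rw [div_mul_div_comm, div_mul_div_comm, div_eq_iff (by simp [*])]
  constructor <;> intro h <;> linear_combination h

theorem menelaus
    (A B C P Q R : Pt)
    (hABC : AffineIndependent ℝ ![A, B, C])
    (tP tQ tR : ℝ)
    (htP1 : tP ≠ 1)
    (htQ1 : tQ ≠ 1)
    (htR1 : tR ≠ 1)
    (hP : P = B + tP • (C - B))
    (hQ : Q = C + tQ • (A - C))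
    (hR : R = A + tR • (B - A)) :
    Collinear ℝ ({P, Q, R} : Set Pt) ↔
      (tR / (1 - tR)) * (tP / (1 - tP)) * (tQ / (1 - tQ)) = -1 := by
  subst hP hQ hR
  rw [collinear_iff_menelaus_polynomial hABC, menelaus_ratio_iff (sub_ne_zero.2 htP1.symm)
    (sub_ne_zero.2 htQ1.symm) (sub_ne_zero.2 htR1.symm)]
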